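/- Let ρ be a d×d density matrix, let R be a d×d Hermitian matrix with 0 ≤ R ≤ I (in the Loewner order), and let ε > 0. If tr(ρR) ≥ 1 − 3ε, then ‖ρ − (√R ρ √R)/tr(ρR)‖₁ ≤ √(24ε) + 6ε, where √R is the positive semidefinite square root of R. -/

import Mathlib

open scoped Classical ComplexOrder

/-- Trace norm of a Hermitian matrix: the sum of the absolute values of its eigenvalues
(defined to be `0` if the matrix is not Hermitian). -/
noncomputable def traceNorm {m : Type*} [Fintype m] [DecidableEq m]
    (A : Matrix m m ℂ) : ℝ :=
  if h : A.IsHermitian then ∑ i, |h.eigenvalues i| else 0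

/-- Loewner order on Hermitian matrices: `A ≤ B` iff `B - A` is positive semidefinite. -/
def loewnerLE {m : Type*} [Fintype m] (A B : Matrix m m ℂ) : Prop :=
  (B - A).PosSemidef

/-- The positive semidefinite square root of a positive semidefinite matrix, as
`Matrix.PosSemidef.sqrt` was defined in the older Mathlib. -/
noncomputable def psdSqrt {m : Type*} [Fintype m] [DecidableEq m] {A : Matrix m m ℂ}
    (hA : A.PosSemidef) : Matrix m m ℂ :=
  (hA.1.eigenvectorUnitary : Matrix m m ℂ) * Matrix.diagonal ((↑) ∘ (√·) ∘ hA.1.eigenvalues) *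
    (star hA.1.eigenvectorUnitary : Matrix m m ℂ)

section Aux
open Matrix

lemma psdSqrt_posSemidef {m : Type*} [Fintype m] [DecidableEq m] {A : Matrix m m ℂ}
    (hA : A.PosSemidef) : (psdSqrt hA).PosSemidef := by
  have hd : (diagonal ((↑) ∘ (√·) ∘ hA.1.eigenvalues) : Matrix m m ℂ).PosSemidef := by
    apply Matrix.PosSemidef.diagonal
    intro i
    show (0 : ℂ) ≤ ((√(hA.1.eigenvalues i) : ℝ) : ℂ)
    exact Complex.zero_le_real.mpr (Real.sqrt_nonneg _)
  have := hd.mul_mul_conjTranspose_same (hA.1.eigenvectorUnitary : Matrix m m ℂ)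
  rwa [← Matrix.star_eq_conjTranspose] at this

lemma psdSqrt_mul_self {m : Type*} [Fintype m] [DecidableEq m] {A : Matrix m m ℂ}
    (hA : A.PosSemidef) : psdSqrt hA * psdSqrt hA = A := by
  have hUU : star (hA.1.eigenvectorUnitary : Matrix m m ℂ) *
      (hA.1.eigenvectorUnitary : Matrix m m ℂ) = 1 :=
    (Matrix.mem_unitaryGroup_iff').mp (hA.1.eigenvectorUnitary).2
  conv_rhs => rw [hA.1.spectral_theorem, Unitary.conjStarAlgAut_apply]
  unfold psdSqrt
  simp only [Matrix.mul_assoc]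
  rw [← Matrix.mul_assoc (star (hA.1.eigenvectorUnitary : Matrix m m ℂ)), hUU, Matrix.one_mul]
  congr 1
  rw [← Matrix.mul_assoc, diagonal_mul_diagonal]
  congr 2
  funext i
  simp only [Function.comp_apply]
  rw [← Complex.ofReal_mul, Real.mul_self_sqrt (hA.eigenvalues_nonneg i)]
  rfl

lemma trace_eq_sum_eig {n : Type*} [Fintype n] [DecidableEq n] {A : Matrix n n ℂ}
    (hA : A.IsHermitian) : A.trace = ∑ i, (hA.eigenvalues i : ℂ) := by
  conv_lhs => rw [hA.spectral_theorem, Unitary.conjStarAlgAut_apply]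
  rw [Matrix.trace_mul_cycle,
    (Matrix.mem_unitaryGroup_iff').mp (hA.eigenvectorUnitary).2, Matrix.one_mul,
    Matrix.trace_diagonal]
  rfl

lemma psd_trace_re {n : Type*} [Fintype n] [DecidableEq n] {A : Matrix n n ℂ}
    (hA : A.PosSemidef) : A.trace = (A.trace.re : ℂ) ∧ 0 ≤ A.trace.re := by
  have h := trace_eq_sum_eig hA.1
  have hre : A.trace.re = ∑ i, hA.1.eigenvalues i := by rw [h]; simp
  exact ⟨by rw [hre, h]; push_cast; ring,
    by rw [hre]; exact Finset.sum_nonneg fun i _ => hA.eigenvalues_nonneg i⟩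

lemma psd_mul_trace {n : Type*} [Fintype n] [DecidableEq n] {A B : Matrix n n ℂ}
    (hA : A.PosSemidef) (hB : B.PosSemidef) :
    (A * B).trace = ((A * B).trace.re : ℂ) ∧ 0 ≤ (A * B).trace.re := by
  have hP : (psdSqrt hA) * (psdSqrt hA) = A := psdSqrt_mul_self hA
  have hPH : (psdSqrt hA).IsHermitian := (psdSqrt_posSemidef hA).1
  have h1 : (A * B).trace = ((psdSqrt hA) * B * (psdSqrt hA)).trace := by
    rw [Matrix.mul_assoc, Matrix.trace_mul_comm A B,
      Matrix.trace_mul_comm (psdSqrt hA) (B * (psdSqrt hA)), Matrix.mul_assoc, hP]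
  have hpsd : ((psdSqrt hA) * B * (psdSqrt hA)).PosSemidef := by
    have := hB.mul_mul_conjTranspose_same (psdSqrt hA)
    rwa [hPH.eq] at this
  rw [h1]; exact psd_trace_re hpsd

lemma eig_le_one {n : Type*} [Fintype n] [DecidableEq n] {R : Matrix n n ℂ}
    (hR : R.PosSemidef) (hR1 : ((1 : Matrix n n ℂ) - R).PosSemidef) (i : n) :
    hR.1.eigenvalues i ≤ 1 := by
  set v := hR.1.eigenvectorBasis i with hv
  have hnorm : ‖v‖ = 1 := hR.1.eigenvectorBasis.orthonormal.1 i
  have hmv : R *ᵥ ⇑v = (hR.1.eigenvalues i : ℂ) • ⇑v := by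
    have := hR.1.mulVec_eigenvectorBasis i
    rw [this]; ext j; simp [Complex.real_smul, hv]
  have hdot : star ⇑v ⬝ᵥ ⇑v = 1 := by
    have : (inner ℂ v v : ℂ) = star ⇑v ⬝ᵥ ⇑v := by
      rw [PiLp.inner_apply, dotProduct]
      simp [mul_comm]
      refine Finset.sum_congr rfl fun j _ => ?_
      rw [Complex.mul_conj, Complex.normSq_eq_norm_sq]; push_cast; ring
    rw [← this, inner_self_eq_norm_sq_to_K, hnorm]
    norm_num
  have h0 := hR1.dotProduct_mulVec_nonneg ⇑v
  rw [Matrix.sub_mulVec, Matrix.one_mulVec, hmv, dotProduct_sub,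
    dotProduct_smul, hdot] at h0
  have h0' : (0 : ℂ) ≤ 1 - (hR.1.eigenvalues i : ℂ) := by
    simpa using h0
  have := (Complex.le_def.mp h0').1
  simp at this
  linarith

lemma sqrt_sub_psd {n : Type*} [Fintype n] [DecidableEq n] {R : Matrix n n ℂ}
    (hR : R.PosSemidef) (h1 : ∀ i, hR.1.eigenvalues i ≤ 1) :
    ((psdSqrt hR) - R).PosSemidef := by
  classical
  set U : Matrix n n ℂ := (hR.1.eigenvectorUnitary : Matrix n n ℂ) with hU
  have hsqrt : (psdSqrt hR) = U * diagonal ((↑) ∘ Real.sqrt ∘ hR.1.eigenvalues) * star U := rfl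
  have hspec : R = U * diagonal (RCLike.ofReal ∘ hR.1.eigenvalues) * star U := by
    conv_lhs => rw [hR.1.spectral_theorem, Unitary.conjStarAlgAut_apply]
  have hfun : diagonal (fun i => ((Real.sqrt (hR.1.eigenvalues i) - hR.1.eigenvalues i : ℝ) : ℂ))
      = diagonal ((↑) ∘ Real.sqrt ∘ hR.1.eigenvalues)
        - diagonal (RCLike.ofReal ∘ hR.1.eigenvalues) := by
    ext i j
    by_cases h : i = j <;> simp [h, Matrix.diagonal_apply]
  have hdiff :
      U * diagonal (fun i => ((Real.sqrt (hR.1.eigenvalues i) - hR.1.eigenvalues i : ℝ) : ℂ))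
        * star U = (psdSqrt hR) - R := by
    rw [hfun, Matrix.mul_sub, Matrix.sub_mul, ← hsqrt, ← hspec]
  rw [← hdiff]
  have hd : Matrix.PosSemidef
      (diagonal (fun i => ((Real.sqrt (hR.1.eigenvalues i) - hR.1.eigenvalues i : ℝ) : ℂ))) := by
    apply Matrix.PosSemidef.diagonal
    intro i
    show (0 : ℂ) ≤ _
    rw [Complex.zero_le_real]
    have h0 := hR.eigenvalues_nonneg i
    have : hR.1.eigenvalues i ≤ Real.sqrt (hR.1.eigenvalues i) := by
      nlinarith [Real.sq_sqrt h0, Real.sqrt_nonneg (hR.1.eigenvalues i),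
        Real.sqrt_le_sqrt (h1 i), Real.sqrt_one]
    linarith
  have := hd.mul_mul_conjTranspose_same U
  rwa [← Matrix.star_eq_conjTranspose] at this

lemma trace_CS {n : Type*} [Fintype n] [DecidableEq n] (A B : Matrix n n ℂ) :
    ‖(Aᴴ * B).trace‖ ≤ Real.sqrt ((Aᴴ * A).trace.re) * Real.sqrt ((Bᴴ * B).trace.re) := by
  classical
  set x : EuclideanSpace ℂ (n × n) := WithLp.toLp 2 (fun p : n × n => A p.1 p.2) with hx
  set y : EuclideanSpace ℂ (n × n) := WithLp.toLp 2 (fun p : n × n => B p.1 p.2) with hy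
  have key : ∀ C D : Matrix n n ℂ, (Cᴴ * D).trace =
      ∑ p : n × n, (starRingEnd ℂ) (C p.1 p.2) * D p.1 p.2 := by
    intro C D
    rw [Matrix.trace, Fintype.sum_prod_type]
    simp only [Matrix.diag_apply, Matrix.mul_apply, Matrix.conjTranspose_apply]
    rw [Finset.sum_comm]
    simp [mul_comm]
  have hinner : (Aᴴ * B).trace = inner ℂ x y := by
    rw [key, PiLp.inner_apply]
    refine Finset.sum_congr rfl fun p _ => ?_
    simp [hx, hy, mul_comm]
  have hnx : Real.sqrt ((Aᴴ * A).trace.re) = ‖x‖ := by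
    rw [EuclideanSpace.norm_eq, key]
    congr 1
    rw [Complex.re_sum]
    congr 1; ext p
    simp [hx, Complex.normSq_eq_norm_sq, ← Complex.normSq_eq_norm_sq, Complex.normSq]
  have hny : Real.sqrt ((Bᴴ * B).trace.re) = ‖y‖ := by
    rw [EuclideanSpace.norm_eq, key]
    congr 1
    rw [Complex.re_sum]
    congr 1; ext p
    simp [hy, Complex.normSq_eq_norm_sq, ← Complex.normSq_eq_norm_sq, Complex.normSq]
  rw [hinner, hnx, hny]
  exact norm_inner_le_norm x y

lemma sign_matrix {n : Type*} [Fintype n] [DecidableEq n] {H : Matrix n n ℂ}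
    (hH : H.IsHermitian) :
    ∃ S : Matrix n n ℂ, S * Sᴴ = 1 ∧
      (H * S).trace = ((∑ i, |hH.eigenvalues i| : ℝ) : ℂ) := by
  classical
  set U : Matrix n n ℂ := (hH.eigenvectorUnitary : Matrix n n ℂ) with hU
  have hUU : star U * U = 1 := (Matrix.mem_unitaryGroup_iff').mp (hH.eigenvectorUnitary).2
  have hUU' : U * star U = 1 := (Matrix.mem_unitaryGroup_iff).mp (hH.eigenvectorUnitary).2
  set s : n → ℂ := fun i => if hH.eigenvalues i < 0 then -1 else 1 with hs
  refine ⟨U * diagonal s * star U, ?_, ?_⟩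
  · have hsconj : ∀ i, s i * (starRingEnd ℂ) (s i) = 1 := by
      intro i; by_cases h : hH.eigenvalues i < 0 <;> simp [hs, h]
    calc (U * diagonal s * star U) * (U * diagonal s * star U)ᴴ
        = U * (diagonal s * ((star U * U) * (diagonal s)ᴴ)) * star U := by
          simp only [Matrix.conjTranspose_mul, Matrix.star_eq_conjTranspose,
            Matrix.conjTranspose_conjTranspose, Matrix.mul_assoc]
      _ = 1 := by
          simp only [Matrix.star_eq_conjTranspose] at hUU hUU' ⊢
          rw [hUU, Matrix.one_mul, Matrix.diagonal_conjTranspose,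
            Matrix.diagonal_mul_diagonal]
          have : (fun i => s i * star (s i)) = fun _ => (1 : ℂ) := by
            funext i; exact hsconj i
          rw [Pi.star_def, this, Matrix.diagonal_one, Matrix.mul_one, hUU']
  · conv_lhs => rw [hH.spectral_theorem, Unitary.conjStarAlgAut_apply]
    have : (U * diagonal (RCLike.ofReal ∘ hH.eigenvalues) * star U) *
        (U * diagonal s * star U)
        = U * (diagonal (RCLike.ofReal ∘ hH.eigenvalues) * diagonal s) * star U := by
      calc (U * diagonal (RCLike.ofReal ∘ hH.eigenvalues) * star U) *
          (U * diagonal s * star U)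
          = U * (diagonal (RCLike.ofReal ∘ hH.eigenvalues) * ((star U * U) *
            (diagonal s))) * star U := by simp only [Matrix.mul_assoc]
        _ = _ := by
            simp only [Matrix.star_eq_conjTranspose] at hUU ⊢
            rw [hUU, Matrix.one_mul, Matrix.mul_assoc]
    simp only [Matrix.star_eq_conjTranspose] at hUU this ⊢
    rw [this, Matrix.trace_mul_cycle, ← Matrix.mul_assoc, hUU, Matrix.one_mul,
      Matrix.diagonal_mul_diagonal, Matrix.trace_diagonal]
    push_cast
    congr 1; funext i
    by_cases h : hH.eigenvalues i < 0
    · simp [hs, h, abs_of_neg h]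
    · simp [hs, h, abs_of_nonneg (not_lt.mp h)]

end Aux

open Matrix in
/-- Gentle (tender) measurement: if `ρ` is a density matrix, `0 ≤ R ≤ I` and
`tr(ρR) ≥ 1 − 3ε`, then `‖ρ − √R ρ √R / tr(ρR)‖₁ ≤ √(24ε) + 6ε`. -/
theorem stmt_2 {d : ℕ} (ρ R : Matrix (Fin d) (Fin d) ℂ) (ε : ℝ)
    (hρ : ρ.PosSemidef) (hρtr : ρ.trace = 1)
    (hR : R.PosSemidef) (hR1 : loewnerLE R 1)
    (hε : 0 < ε)
    (h : 1 - 3 * ε ≤ ((ρ * R).trace).re) :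
    traceNorm (ρ - ((ρ * R).trace)⁻¹ • (psdSqrt hR * ρ * psdSqrt hR)) ≤
      Real.sqrt (24 * ε) + 6 * ε := by
  have hR1' : ((1 : Matrix (Fin d) (Fin d) ℂ) - R).PosSemidef := hR1
  -- the trace of ρ*R is a nonnegative real
  have ht := psd_mul_trace hρ hR
  set t : ℂ := (ρ * R).trace with htdef
  set c : ℝ := t.re with hcdef
  have htc : t = (c : ℂ) := ht.1
  have hc0 : 0 ≤ c := ht.2
  -- eigenvalue sum of ρ is 1
  have hsum_ρ : ∑ i, hρ.1.eigenvalues i = 1 := by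
    have h1 := trace_eq_sum_eig hρ.1
    rw [hρtr] at h1
    have : ((∑ i, hρ.1.eigenvalues i : ℝ) : ℂ) = 1 := by push_cast; rw [← h1]
    exact_mod_cast this
  -- c ≤ 1
  have hρ1R := psd_mul_trace hρ hR1'
  have htr1R : (ρ * (1 - R)).trace = 1 - t := by
    rw [Matrix.mul_sub, Matrix.trace_sub, Matrix.mul_one, hρtr]
  have hc1 : c ≤ 1 := by
    have h2 := hρ1R.2
    rw [htr1R] at h2
    simp only [Complex.sub_re, Complex.one_re] at h2
    linarith
  have h3ε : 1 - c ≤ 3 * ε := by linarith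
  by_cases hzero : t = 0
  · -- degenerate case: the matrix is ρ itself, and 1 ≤ 3ε
    rw [hzero]
    simp only [_root_.inv_zero, zero_smul, sub_zero]
    have htn : traceNorm ρ = ∑ i, |hρ.1.eigenvalues i| := by
      simp only [traceNorm]; rw [dif_pos hρ.1]
    have habs : ∑ i, |hρ.1.eigenvalues i| = ∑ i, hρ.1.eigenvalues i := by
      refine Finset.sum_congr rfl fun i _ => abs_of_nonneg (hρ.eigenvalues_nonneg i)
    have hcz : c = 0 := by rw [hcdef, hzero]; simp
    have hε3 : 1 ≤ 3 * ε := by rw [hcz] at h3ε; linarith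
    rw [htn, habs, hsum_ρ]
    have := Real.sqrt_nonneg (24 * ε)
    linarith
  · -- main case
    have hcpos : 0 < c := by
      rcases lt_or_eq_of_le hc0 with h' | h'
      · exact h'
      · exact absurd (by rw [htc, ← h']; simp) hzero
    set T : Matrix (Fin d) (Fin d) ℂ := (psdSqrt hR) with hTdef
    have hTT : T * T = R := psdSqrt_mul_self hR
    have hTH : T.IsHermitian := (psdSqrt_posSemidef hR).1
    set P : Matrix (Fin d) (Fin d) ℂ := (psdSqrt hρ) with hPdef
    have hPP : P * P = ρ := psdSqrt_mul_self hρ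
    have hPH : P.IsHermitian := (psdSqrt_posSemidef hρ).1
    set Q : Matrix (Fin d) (Fin d) ℂ := 1 - T with hQdef
    have hQH : Q.IsHermitian := by
      rw [hQdef]; exact Matrix.isHermitian_one.sub hTH
    -- trace of T * ρ * T is t
    have hTρT : (T * ρ * T).trace = t := by
      rw [htdef, Matrix.trace_mul_cycle, hTT, Matrix.trace_mul_comm]
    -- H is Hermitian
    have hstar_t : star (t⁻¹ : ℂ) = t⁻¹ := by
      rw [htc]; simp [← Complex.ofReal_inv]
    set H : Matrix (Fin d) (Fin d) ℂ := ρ - t⁻¹ • (T * ρ * T) with hHdef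
    have hσH : (T * ρ * T).IsHermitian := by
      have := hρ.mul_mul_conjTranspose_same T
      rw [hTH.eq] at this
      exact this.1
    have hH : H.IsHermitian := by
      rw [hHdef, Matrix.IsHermitian, Matrix.conjTranspose_sub,
        Matrix.conjTranspose_smul, hρ.1.eq, hσH.eq, hstar_t]
    -- sign matrix
    obtain ⟨S, hS1, hS2⟩ := sign_matrix hH
    -- trace-norm as a real part
    have htn : traceNorm H = ((H * S).trace).re := by
      simp only [traceNorm]; rw [dif_pos hH, hS2, Complex.ofReal_re]
    -- basic rewrites
    have hPP' : ∀ X : Matrix (Fin d) (Fin d) ℂ, P * (P * X) = ρ * X := fun X => by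
      rw [← Matrix.mul_assoc, hPP]
    -- the three pieces
    set X1 : Matrix (Fin d) (Fin d) ℂ := Q * (ρ * S) with hX1def
    set X2 : Matrix (Fin d) (Fin d) ℂ := T * (ρ * (Q * S)) with hX2def
    set N : Matrix (Fin d) (Fin d) ℂ := (T * ρ * T) * S with hNdef
    have hNassoc : N = T * (ρ * (T * S)) := by
      rw [hNdef]; simp only [Matrix.mul_assoc]
    have hX1tr : X1.trace = (ρ * S).trace - (T * (ρ * S)).trace := by
      rw [hX1def, hQdef, Matrix.sub_mul, Matrix.one_mul, Matrix.trace_sub]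
    have hX2tr : X2.trace = (T * (ρ * S)).trace - N.trace := by
      rw [hX2def, hQdef, Matrix.sub_mul, Matrix.one_mul, Matrix.mul_sub,
        Matrix.mul_sub, Matrix.trace_sub, hNassoc]
    have hHS : (H * S).trace = (ρ * S).trace - t⁻¹ * N.trace := by
      rw [hHdef, Matrix.sub_mul, Matrix.smul_mul, Matrix.trace_sub,
        Matrix.trace_smul, hNdef, smul_eq_mul]
    have hdecomp : (H * S).trace = X1.trace + X2.trace + (1 - t⁻¹) * N.trace := by
      rw [hHS, hX1tr, hX2tr]; ring
    -- quantity a = trace of QρQ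
    set Y : Matrix (Fin d) (Fin d) ℂ := Q * (ρ * Q) with hYdef
    have hYpsd : Y.PosSemidef := by
      have := hρ.mul_mul_conjTranspose_same Q
      rw [hQH.eq, Matrix.mul_assoc] at this
      exact this
    set a : ℝ := Y.trace.re with hadef
    have hYre := psd_trace_re hYpsd
    have ha0 : 0 ≤ a := hYre.2
    -- a ≤ 1 - c
    have hD : ((psdSqrt hR) - R).PosSemidef := sqrt_sub_psd hR (eig_le_one hR hR1')
    have hDtr := psd_mul_trace hρ hD
    have hmid : (1 : Matrix (Fin d) (Fin d) ℂ) - R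
        = Q * Q + ((T - R) + (T - R)) := by
      rw [hQdef, ← hTT]; noncomm_ring
    have hYtrace : Y.trace = (ρ * (Q * Q)).trace := by
      rw [hYdef, ← Matrix.mul_assoc, Matrix.trace_mul_cycle,
        ← Matrix.mul_assoc, Matrix.trace_mul_comm, Matrix.mul_assoc]
    have hsplit : (ρ * (1 - R)).trace
        = Y.trace + ((ρ * ((psdSqrt hR) - R)).trace + (ρ * ((psdSqrt hR) - R)).trace) := by
      rw [hmid, Matrix.mul_add, Matrix.trace_add, Matrix.mul_add,
        Matrix.trace_add, hYtrace, ← hTdef]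
    have ha_le : a ≤ 1 - c := by
      have hre : (1 : ℝ) - c = a + ((ρ * ((psdSqrt hR) - R)).trace.re
          + (ρ * ((psdSqrt hR) - R)).trace.re) := by
        have := congrArg Complex.re hsplit
        rw [htr1R] at this
        simpa [hcdef] using this
      have := hDtr.2
      linarith
    have ha3ε : a ≤ 3 * ε := le_trans ha_le h3ε
    -- Bound 1 : ‖X1.trace‖ ≤ √a
    have hb1 : ‖X1.trace‖ ≤ Real.sqrt a := by
      have hcs := trace_CS (P * Q) (P * S)
      have hA : (P * Q)ᴴ = Q * P := by
        rw [Matrix.conjTranspose_mul, hQH.eq, hPH.eq]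
      have e1 : (P * Q)ᴴ * (P * S) = X1 := by
        rw [hA, Matrix.mul_assoc, hPP' S, hX1def]
      have e2 : (P * Q)ᴴ * (P * Q) = Y := by
        rw [hA, Matrix.mul_assoc, hPP' Q, hYdef, ← Matrix.mul_assoc, Matrix.mul_assoc]
      have e3 : ((P * S)ᴴ * (P * S)).trace = 1 := by
        rw [Matrix.conjTranspose_mul, hPH.eq, Matrix.mul_assoc, hPP' S,
          ← Matrix.mul_assoc, Matrix.trace_mul_cycle, hS1, Matrix.one_mul, hρtr]
      rw [e1, e2, e3] at hcs
      simpa [hadef] using hcs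
    -- Bound 2 : ‖X2.trace‖ ≤ √c * √a
    have hb2 : ‖X2.trace‖ ≤ Real.sqrt c * Real.sqrt a := by
      have hcs := trace_CS (P * T) (P * (Q * S))
      have hA : (P * T)ᴴ = T * P := by
        rw [Matrix.conjTranspose_mul, hTH.eq, hPH.eq]
      have e1 : (P * T)ᴴ * (P * (Q * S)) = X2 := by
        rw [hA, Matrix.mul_assoc, hPP' (Q * S), hX2def]
      have e2 : ((P * T)ᴴ * (P * T)).trace = t := by
        rw [hA, Matrix.mul_assoc, hPP' T, ← Matrix.mul_assoc, hTρT]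
      have e3 : ((P * (Q * S))ᴴ * (P * (Q * S))).trace = Y.trace := by
        rw [Matrix.conjTranspose_mul, hPH.eq, Matrix.mul_assoc, hPP' (Q * S),
          Matrix.conjTranspose_mul, hQH.eq]
        -- (Sᴴ * Q) * (ρ * (Q * S)) ; cycle the S around
        have : (Sᴴ * Q) * (ρ * (Q * S)) = Sᴴ * (Y * S) := by
          rw [hYdef]; simp only [Matrix.mul_assoc]
        rw [this, ← Matrix.mul_assoc, Matrix.trace_mul_cycle, ← Matrix.mul_assoc,
          hS1, Matrix.one_mul]
      rw [e1, e2, e3] at hcs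
      simpa [hadef, hcdef] using hcs
    -- Bound 3 : ‖N.trace‖ ≤ c
    have hb3 : ‖N.trace‖ ≤ c := by
      have hcs := trace_CS (P * T) (P * (T * S))
      have hA : (P * T)ᴴ = T * P := by
        rw [Matrix.conjTranspose_mul, hTH.eq, hPH.eq]
      have e1 : (P * T)ᴴ * (P * (T * S)) = N := by
        rw [hA, Matrix.mul_assoc, hPP' (T * S), hNassoc]
      have e2 : ((P * T)ᴴ * (P * T)).trace = t := by
        rw [hA, Matrix.mul_assoc, hPP' T, ← Matrix.mul_assoc, hTρT]
      have e3 : ((P * (T * S))ᴴ * (P * (T * S))).trace = t := by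
        rw [Matrix.conjTranspose_mul, hPH.eq, Matrix.mul_assoc, hPP' (T * S),
          Matrix.conjTranspose_mul, hTH.eq]
        have : (Sᴴ * T) * (ρ * (T * S)) = Sᴴ * ((T * ρ * T) * S) := by
          simp only [Matrix.mul_assoc]
        rw [this, ← Matrix.mul_assoc, Matrix.trace_mul_cycle, ← Matrix.mul_assoc,
          hS1, Matrix.one_mul, hTρT]
      rw [e1, e2, e3] at hcs
      have : Real.sqrt (t.re) * Real.sqrt (t.re) = c := by
        rw [← hcdef, Real.mul_self_sqrt hc0]
      rw [this] at hcs
      exact hcs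
    -- Bound 3' : the third term
    have hinv : 1 ≤ c⁻¹ := by
      rw [show (1:ℝ) = 1⁻¹ by norm_num]
      exact inv_anti₀ hcpos hc1
    have hb3' : ‖(1 - t⁻¹) * N.trace‖ ≤ 1 - c := by
      have hcoef : ‖(1 - t⁻¹ : ℂ)‖ = c⁻¹ - 1 := by
        rw [htc, ← Complex.ofReal_inv, ← Complex.ofReal_one, ← Complex.ofReal_sub,
          Complex.norm_real, Real.norm_eq_abs, abs_of_nonpos (by linarith)]
        ring
      rw [norm_mul, hcoef]
      calc (c⁻¹ - 1) * ‖N.trace‖ ≤ (c⁻¹ - 1) * c := by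
            apply mul_le_mul_of_nonneg_left hb3
            linarith
        _ = 1 - c := by field_simp
    -- assemble everything
    have hre_le : ((H * S).trace).re
        ≤ ‖X1.trace‖ + ‖X2.trace‖ + ‖(1 - t⁻¹) * N.trace‖ := by
      rw [hdecomp]
      calc (X1.trace + X2.trace + (1 - t⁻¹) * N.trace).re
          ≤ ‖X1.trace + X2.trace + (1 - t⁻¹) * N.trace‖ := Complex.re_le_norm _
        _ ≤ ‖X1.trace + X2.trace‖ + ‖(1 - t⁻¹) * N.trace‖ := norm_add_le _ _
        _ ≤ ‖X1.trace‖ + ‖X2.trace‖ + ‖(1 - t⁻¹) * N.trace‖ := by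
            have := norm_add_le X1.trace X2.trace
            linarith
    have hsa : Real.sqrt a ≤ Real.sqrt (3 * ε) := Real.sqrt_le_sqrt ha3ε
    have hscsa : Real.sqrt c * Real.sqrt a ≤ Real.sqrt (3 * ε) := by
      calc Real.sqrt c * Real.sqrt a ≤ 1 * Real.sqrt a := by
            apply mul_le_mul_of_nonneg_right _ (Real.sqrt_nonneg a)
            exact Real.sqrt_le_one.mpr hc1
        _ = Real.sqrt a := one_mul _
        _ ≤ Real.sqrt (3 * ε) := hsa
    have h2s : Real.sqrt (3 * ε) + Real.sqrt (3 * ε) ≤ Real.sqrt (24 * ε) := by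
      rw [show Real.sqrt (3 * ε) + Real.sqrt (3 * ε) = 2 * Real.sqrt (3 * ε) by ring]
      rw [show (2 : ℝ) = Real.sqrt 4 by
        rw [show (4:ℝ) = 2^2 by norm_num, Real.sqrt_sq (by norm_num)]]
      rw [← Real.sqrt_mul (by norm_num : (0:ℝ) ≤ 4)]
      apply Real.sqrt_le_sqrt
      nlinarith
    rw [htn]
    calc ((H * S).trace).re
        ≤ ‖X1.trace‖ + ‖X2.trace‖ + ‖(1 - t⁻¹) * N.trace‖ := hre_le
      _ ≤ Real.sqrt a + Real.sqrt c * Real.sqrt a + (1 - c) := by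
          have := hb1; have := hb2; have := hb3'
          linarith
      _ ≤ Real.sqrt (3 * ε) + Real.sqrt (3 * ε) + 3 * ε := by linarith
      _ ≤ Real.sqrt (24 * ε) + 6 * ε := by
          have := h2s
          linarith [hε]
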